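/- arXiv:math/0506334 — 7 statements merged into one kernel-verified Lean document; each statement's English description precedes it below -/
import Mathlib

section
/- Let α be a permutation of [m] with α ≠ α⁻¹ and β a permutation of [n] with β ≠ β⁻¹, and let σ be the direct sum of α and β (a permutation of [m+n]). Then there exists a permutation ρ of [m+n] with x(ρ) = x(σ), ρ ≠ σ, and ρ ≠ σ⁻¹; in other words x(σ) does not determine σ even up to inversion. (One may take ρ to be the direct sum of α⁻¹ and β.) -/
def xray (n : ℕ) (π : Equiv.Perm (Fin n)) (k : ℕ) : ℕ :=
  (Finset.univ.filter (fun i : Fin n => ((i : ℕ) + 1) + ((π i : ℕ) + 1) = k + 1)).card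

def directSum {m n : ℕ} (α : Equiv.Perm (Fin m)) (β : Equiv.Perm (Fin n)) :
    Equiv.Perm (Fin (m + n)) :=
  (finSumFinEquiv.symm.trans (Equiv.sumCongr α β)).trans finSumFinEquiv

lemma directSum_castAdd {m n : ℕ} (α : Equiv.Perm (Fin m)) (β : Equiv.Perm (Fin n)) (i : Fin m) :
    directSum α β (Fin.castAdd n i) = Fin.castAdd n (α i) := by
  simp [directSum]

lemma directSum_natAdd {m n : ℕ} (α : Equiv.Perm (Fin m)) (β : Equiv.Perm (Fin n)) (j : Fin n) :
    directSum α β (Fin.natAdd m j) = Fin.natAdd m (β j) := by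
  simp [directSum]

lemma xray_inv (n : ℕ) (π : Equiv.Perm (Fin n)) (k : ℕ) :
    xray n π⁻¹ k = xray n π k := by
  unfold xray
  apply Finset.card_bij (fun i _ => π⁻¹ i)
  · intro a ha
    simp only [Finset.mem_filter, Finset.mem_univ, true_and,
      Equiv.Perm.coe_inv, Equiv.apply_symm_apply] at ha ⊢
    omega
  · intro a _ b _ h
    exact (π⁻¹).injective h
  · intro b hb
    refine ⟨π b, Finset.mem_filter.2 ⟨Finset.mem_univ _, ?_⟩, by simp⟩
    simp only [Finset.mem_filter, Finset.mem_univ, true_and] at hb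
    simp only [Equiv.Perm.coe_inv, Equiv.symm_apply_apply]
    omega

lemma xray_directSum (m n : ℕ) (α : Equiv.Perm (Fin m)) (β : Equiv.Perm (Fin n)) (k : ℕ) :
    xray (m + n) (directSum α β) k = xray m α k + xray n β (k - 2 * m) := by
  unfold xray
  simp only [Finset.card_filter]
  rw [Fin.sum_univ_add]
  congr 1
  · apply Finset.sum_congr rfl
    intro i _
    rw [directSum_castAdd]
    simp
  · apply Finset.sum_congr rfl
    intro j _
    rw [directSum_natAdd]
    simp only [Fin.coe_natAdd]
    congr 1
    exact propext (by omega)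

lemma directSum_inv {m n : ℕ} (α : Equiv.Perm (Fin m)) (β : Equiv.Perm (Fin n)) :
    (directSum α β)⁻¹ = directSum α⁻¹ β⁻¹ := by
  apply Equiv.ext
  intro x
  refine Fin.addCases (fun i => ?_) (fun j => ?_) x
  · rw [directSum_castAdd, Equiv.Perm.inv_eq_iff_eq, directSum_castAdd,
      Equiv.Perm.coe_inv, Equiv.apply_symm_apply]
  · rw [directSum_natAdd, Equiv.Perm.inv_eq_iff_eq, directSum_natAdd,
      Equiv.Perm.coe_inv, Equiv.apply_symm_apply]

/-- If `α` and `β` are both non-involutions, then the X-ray of their direct sum `σ`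
does not determine `σ` even up to inversion. -/
theorem xray_directSum_not_determined (m n : ℕ)
    (α : Equiv.Perm (Fin m)) (β : Equiv.Perm (Fin n))
    (hα : α ≠ α⁻¹) (hβ : β ≠ β⁻¹) :
    ∃ ρ : Equiv.Perm (Fin (m + n)),
      (∀ k : ℕ, xray (m + n) ρ k = xray (m + n) (directSum α β) k) ∧
      ρ ≠ directSum α β ∧ ρ ≠ (directSum α β)⁻¹ := by
  refine ⟨directSum α⁻¹ β, ?_, ?_, ?_⟩
  · intro k
    rw [xray_directSum, xray_directSum, xray_inv]
  · intro h
    apply hα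
    apply Equiv.ext
    intro i
    have h2 : directSum α⁻¹ β (Fin.castAdd n i) = directSum α β (Fin.castAdd n i) := by rw [h]
    rw [directSum_castAdd, directSum_castAdd] at h2
    exact (Fin.castAdd_injective m n h2).symm
  · intro h
    apply hβ
    apply Equiv.ext
    intro j
    rw [directSum_inv] at h
    have h2 : directSum α⁻¹ β (Fin.natAdd m j) = directSum α⁻¹ β⁻¹ (Fin.natAdd m j) := by rw [h]
    rw [directSum_natAdd, directSum_natAdd] at h2
    have : (Fin.natAdd m (β j) : ℕ) = (Fin.natAdd m (β⁻¹ j) : ℕ) := by rw [h2]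
    simp only [Fin.coe_natAdd] at this
    exact Fin.ext (by omega)
end

section
/- For every n, the number of distinct binary X-rays of permutations of [n] is at most the number of integer lattice points (x_1, …, x_n) ∈ ℤⁿ satisfying x_{i+1} ≥ x_i + 1 for i = 1,…,n−1, x_1 + ⋯ + x_i ≥ i² for i = 1,…,n, and x_1 + ⋯ + x_n = n². (This latter count equals the number of score sequences of tournaments on n vertices.) -/
/-- the position map `j ↦ j + π j`. -/
def gm {n : ℕ} (π : Equiv.Perm (Fin n)) (j : Fin n) : Fin (2 * n - 1) :=
  ⟨(j : ℕ) + (π j : ℕ), by have h1 := j.2; have h2 := (π j).2; omega⟩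

/-- candidate score map -/
noncomputable def xmap (n : ℕ) (v : Fin (2 * n - 1) → ℕ) : Fin n → ℤ :=
  if h : (Finset.univ.filter fun k => v k = 1).card = n then
    fun i => ((((Finset.univ.filter fun k => v k = 1).orderEmbOfFin h i : Fin (2 * n - 1)) : ℕ) : ℤ) + 1
  else 0

lemma strictMono_val_le {c N : ℕ} (f : Fin c → Fin N) (hf : StrictMono f) :
    ∀ m (hm : m < c), m ≤ (f ⟨m, hm⟩ : ℕ) := by
  intro m
  induction m with
  | zero => intro hm; exact Nat.zero_le _
  | succ p ih =>
    intro hm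
    have h1 : f ⟨p, by omega⟩ < f ⟨p + 1, hm⟩ := hf (by simp [Fin.lt_def])
    have h2 := ih (by omega)
    have h3 : (f ⟨p, by omega⟩ : ℕ) < (f ⟨p + 1, hm⟩ : ℕ) := h1
    omega

lemma sum_range_le_sum_finset {N : ℕ} (A : Finset (Fin N)) :
    ∑ m ∈ Finset.range A.card, m ≤ ∑ a ∈ A, (a : ℕ) := by
  classical
  set c := A.card with hc
  set e := A.orderEmbOfFin hc.symm with he
  have hA : A = Finset.univ.image (fun m : Fin c => (e m : Fin N)) := by
    ext a
    simp only [Finset.mem_image, Finset.mem_univ, true_and]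
    constructor
    · intro ha
      have : a ∈ Set.range e := by
        rw [he, Finset.range_orderEmbOfFin]; exact ha
      obtain ⟨m, hm⟩ := this; exact ⟨m, hm⟩
    · rintro ⟨m, rfl⟩; exact Finset.orderEmbOfFin_mem _ _ _
  have hinj : ∀ x ∈ (Finset.univ : Finset (Fin c)), ∀ y ∈ Finset.univ,
      (e x : Fin N) = e y → x = y := fun x _ y _ h => e.injective h
  have h1 : ∑ a ∈ A, (a : ℕ) = ∑ m : Fin c, ((e m : Fin N) : ℕ) := by
    conv_lhs => rw [hA]
    exact Finset.sum_image hinj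
  have h2 : ∑ m ∈ Finset.range c, m = ∑ m : Fin c, (m : ℕ) :=
    (Fin.sum_univ_eq_sum_range _ _).symm
  rw [h1, h2]
  apply Finset.sum_le_sum
  intro m _
  exact strictMono_val_le e e.strictMono m.1 m.2

lemma gauss (i : ℕ) : (∑ m ∈ Finset.range i, m) + (∑ m ∈ Finset.range i, m) + i = i ^ 2 := by
  induction i with
  | zero => simp
  | succ p ih =>
    rw [Finset.sum_range_succ]
    have h : (p + 1) ^ 2 = p ^ 2 + p + p + 1 := by ring
    linarith

lemma card_filter_lt (n i : ℕ) (hi : i ≤ n) :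
    (Finset.univ.filter fun j : Fin n => (j : ℕ) < i).card = i := by
  have h : (Finset.univ.filter fun j : Fin n => (j : ℕ) < i)
      = (Finset.range i).attachFin (fun m hm => lt_of_lt_of_le (Finset.mem_range.mp hm) hi) := by
    ext j
    simp [Finset.mem_attachFin]
  rw [h, Finset.card_attachFin, Finset.card_range]

lemma xray_eq_card {n : ℕ} (π : Equiv.Perm (Fin n)) (k : Fin (2 * n - 1)) :
    (Finset.univ.filter fun j => gm π j = k).card = xray n π ((k : ℕ) + 1) := by
  unfold xray
  congr 1
  apply Finset.filter_congr
  intro j _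
  simp only [gm, Fin.ext_iff]
  constructor <;> intro h <;> omega

lemma gm_injective {n : ℕ} (π : Equiv.Perm (Fin n)) (hb : ∀ k : ℕ, xray n π k ≤ 1) :
    Function.Injective (gm π) := by
  intro j1 j2 hEq
  by_contra hne
  have h1 : j1 ∈ Finset.univ.filter fun j => gm π j = gm π j1 := by simp
  have h2 : j2 ∈ Finset.univ.filter fun j => gm π j = gm π j1 := by simp [hEq]
  have h3 : 1 < (Finset.univ.filter fun j => gm π j = gm π j1).card :=
    Finset.one_lt_card.mpr ⟨j1, h1, j2, h2, hne⟩
  rw [xray_eq_card] at h3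
  have := hb (((gm π j1 : Fin (2 * n - 1)) : ℕ) + 1)
  omega

lemma ones_eq_image {n : ℕ} {v : Fin (2 * n - 1) → ℕ} (π : Equiv.Perm (Fin n))
    (hb : ∀ k : ℕ, xray n π k ≤ 1)
    (hvk : ∀ k : Fin (2 * n - 1), v k = xray n π ((k : ℕ) + 1)) :
    (Finset.univ.filter fun k => v k = 1) = Finset.univ.image (gm π) := by
  ext k
  simp only [Finset.mem_filter, Finset.mem_image, Finset.mem_univ, true_and]
  rw [hvk k]
  constructor
  · intro h1
    have h2 : 0 < (Finset.univ.filter fun j => gm π j = k).card := by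
      rw [xray_eq_card]; omega
    obtain ⟨j, hj⟩ := Finset.card_pos.mp h2
    exact ⟨j, (Finset.mem_filter.mp hj).2⟩
  · rintro ⟨j, rfl⟩
    have hle := hb (((gm π j : Fin (2 * n - 1)) : ℕ) + 1)
    have hge : 0 < (Finset.univ.filter fun j' => gm π j' = gm π j).card :=
      Finset.card_pos.mpr ⟨j, by simp⟩
    rw [xray_eq_card] at hge
    omega

lemma card_ones {n : ℕ} {v : Fin (2 * n - 1) → ℕ} (π : Equiv.Perm (Fin n))
    (hb : ∀ k : ℕ, xray n π k ≤ 1)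
    (hvk : ∀ k : Fin (2 * n - 1), v k = xray n π ((k : ℕ) + 1)) :
    (Finset.univ.filter fun k => v k = 1).card = n := by
  rw [ones_eq_image π hb hvk, Finset.card_image_of_injective _ (gm_injective π hb),
    Finset.card_univ, Fintype.card_fin]

lemma img_orderEmb {n : ℕ} (S : Finset (Fin (2 * n - 1))) (hcard : S.card = n) :
    Finset.univ.image (fun j : Fin n => (S.orderEmbOfFin hcard j : Fin (2 * n - 1))) = S := by
  ext k
  simp only [Finset.mem_image, Finset.mem_univ, true_and]
  constructor
  · rintro ⟨j, rfl⟩; exact Finset.orderEmbOfFin_mem _ _ _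
  · intro hk
    have : k ∈ Set.range (S.orderEmbOfFin hcard) := by
      rw [Finset.range_orderEmbOfFin]; exact hk
    obtain ⟨j, hj⟩ := this; exact ⟨j, hj⟩

lemma partial_sum_bound {n : ℕ} (π : Equiv.Perm (Fin n)) (S : Finset (Fin (2 * n - 1)))
    (hS : S = Finset.univ.image (gm π)) (hginj : Function.Injective (gm π))
    (hcard : S.card = n) (i : ℕ) (hi : i ≤ n) :
    i ^ 2 ≤ ∑ j ∈ Finset.univ.filter (fun j : Fin n => (j : ℕ) < i),
      (((S.orderEmbOfFin hcard j : Fin (2 * n - 1)) : ℕ) + 1) := by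
  classical
  set e := S.orderEmbOfFin hcard with he
  set F := Finset.univ.filter (fun j : Fin n => (j : ℕ) < i) with hF
  have hFcard : F.card = i := card_filter_lt n i hi
  set E := F.image (fun j => (e j : Fin (2 * n - 1))) with hE
  have heinj : Function.Injective (fun j : Fin n => (e j : Fin (2 * n - 1))) :=
    fun x y h => e.injective h
  have hEcard : E.card = i := by
    rw [hE, Finset.card_image_of_injective _ heinj, hFcard]
  have hsum1 : ∑ j ∈ F, (((e j : Fin (2 * n - 1)) : ℕ) + 1) = ∑ k ∈ E, ((k : ℕ) + 1) := by
    rw [hE, Finset.sum_image (fun x _ y _ h => heinj h)]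
  set T := Finset.univ.filter (fun j : Fin n => gm π j ∈ E) with hT
  have hES : E ⊆ Finset.univ.image (gm π) := by
    rw [← hS]
    intro k hk
    rw [hE] at hk
    obtain ⟨j, _, rfl⟩ := Finset.mem_image.mp hk
    rw [← img_orderEmb S hcard]
    exact Finset.mem_image.mpr ⟨j, Finset.mem_univ _, rfl⟩
  have hET : E = T.image (gm π) := by
    ext k
    constructor
    · intro hk
      obtain ⟨j, _, rfl⟩ := Finset.mem_image.mp (hES hk)
      exact Finset.mem_image.mpr ⟨j, Finset.mem_filter.mpr ⟨Finset.mem_univ _, hk⟩, rfl⟩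
    · intro hk
      obtain ⟨j, hj, rfl⟩ := Finset.mem_image.mp hk
      exact (Finset.mem_filter.mp hj).2
  have hTcard : T.card = i := by
    rw [← hEcard, hET, Finset.card_image_of_injective _ hginj]
  have hsum2 : ∑ k ∈ E, ((k : ℕ) + 1) = ∑ j ∈ T, ((j : ℕ) + (π j : ℕ) + 1) := by
    rw [hET, Finset.sum_image (fun x _ y _ h => hginj h)]
    exact Finset.sum_congr rfl (fun j _ => by simp [gm])
  have hs3 : ∑ j ∈ T, ((j : ℕ) + (π j : ℕ) + 1)
      = (∑ j ∈ T, (j : ℕ)) + (∑ j ∈ T, (π j : ℕ)) + T.card := by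
    rw [Finset.sum_add_distrib, Finset.sum_add_distrib, Finset.sum_const, smul_eq_mul, mul_one]
  have hA1 : ∑ m ∈ Finset.range i, m ≤ ∑ j ∈ T, (j : ℕ) := by
    have h := sum_range_le_sum_finset T
    rwa [hTcard] at h
  have hA2 : ∑ m ∈ Finset.range i, m ≤ ∑ j ∈ T, (π j : ℕ) := by
    have h1 : ∑ j ∈ T, ((π j : ℕ)) = ∑ p ∈ T.image π, (p : ℕ) :=
      (Finset.sum_image (fun x _ y _ h => π.injective h)).symm
    have h2 := sum_range_le_sum_finset (T.image π)
    rw [Finset.card_image_of_injective _ π.injective, hTcard] at h2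
    omega
  have hg := gauss i
  rw [hsum1, hsum2, hs3, hTcard]
  linarith

lemma total_sum {n : ℕ} (π : Equiv.Perm (Fin n)) (S : Finset (Fin (2 * n - 1)))
    (hS : S = Finset.univ.image (gm π)) (hginj : Function.Injective (gm π))
    (hcard : S.card = n) :
    ∑ j : Fin n, (((S.orderEmbOfFin hcard j : Fin (2 * n - 1)) : ℕ) + 1) = n ^ 2 := by
  classical
  set e := S.orderEmbOfFin hcard with he
  have heinj : Function.Injective (fun j : Fin n => (e j : Fin (2 * n - 1))) :=
    fun x y h => e.injective h
  have h1 : ∑ j : Fin n, (((e j : Fin (2 * n - 1)) : ℕ) + 1)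
      = ∑ k ∈ S, ((k : ℕ) + 1) := by
    conv_rhs => rw [← img_orderEmb S hcard]
    rw [Finset.sum_image (fun x _ y _ h => heinj h)]
  have h2 : ∑ k ∈ S, ((k : ℕ) + 1) = ∑ j : Fin n, ((j : ℕ) + (π j : ℕ) + 1) := by
    rw [hS, Finset.sum_image (fun x _ y _ h => hginj h)]
    exact Finset.sum_congr rfl (fun j _ => by simp [gm])
  have h3 : ∑ j : Fin n, ((j : ℕ) + (π j : ℕ) + 1)
      = (∑ j : Fin n, (j : ℕ)) + (∑ j : Fin n, (π j : ℕ)) + n := by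
    rw [Finset.sum_add_distrib, Finset.sum_add_distrib, Finset.sum_const, smul_eq_mul, mul_one,
      Finset.card_univ, Fintype.card_fin]
  have h4 : ∑ j : Fin n, ((π j : ℕ)) = ∑ j : Fin n, (j : ℕ) :=
    Equiv.sum_comp π (fun j => (j : ℕ))
  have h5 : ∑ j : Fin n, (j : ℕ) = ∑ m ∈ Finset.range n, m :=
    Fin.sum_univ_eq_sum_range (fun m => m) n
  have hg := gauss n
  rw [h1, h2, h3, h4, h5]
  linarith

/-- The number of distinct binary X-rays of permutations of `[n]` is at most the
number of integer lattice points `(x_1, …, x_n)` with `x_{i+1} ≥ x_i + 1`,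
`x_1 + ⋯ + x_i ≥ i²` for all `i`, and `x_1 + ⋯ + x_n = n²`. -/
theorem binary_xrays_le_score_sequences (n : ℕ) :
    {v : Fin (2 * n - 1) → ℕ |
        ∃ π : Equiv.Perm (Fin n),
          (∀ k : ℕ, xray n π k ≤ 1) ∧
          (∀ k : Fin (2 * n - 1), v k = xray n π ((k : ℕ) + 1))}.ncard
      ≤
    {x : Fin n → ℤ |
        (∀ (i : Fin n) (h : (i : ℕ) + 1 < n), x i + 1 ≤ x ⟨(i : ℕ) + 1, h⟩) ∧
        (∀ i : ℕ, i ≤ n →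
            ((i : ℤ)) ^ 2 ≤ ∑ j ∈ Finset.univ.filter (fun j : Fin n => (j : ℕ) < i), x j) ∧
        (∑ j : Fin n, x j) = (n : ℤ) ^ 2}.ncard := by
  classical
  rcases Nat.eq_zero_or_pos n with rfl | hn
  · -- n = 0 : both sets are `univ` over a subsingleton type
    have h1 : {v : Fin (2 * 0 - 1) → ℕ |
        ∃ π : Equiv.Perm (Fin 0),
          (∀ k : ℕ, xray 0 π k ≤ 1) ∧
          (∀ k : Fin (2 * 0 - 1), v k = xray 0 π ((k : ℕ) + 1))} = Set.univ := by
      ext v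
      simp only [Set.mem_setOf_eq, Set.mem_univ, iff_true]
      exact ⟨Equiv.refl _, fun k => by simp [xray], fun k => k.elim0⟩
    have h2 : {x : Fin 0 → ℤ |
        (∀ (i : Fin 0) (h : (i : ℕ) + 1 < 0), x i + 1 ≤ x ⟨(i : ℕ) + 1, h⟩) ∧
        (∀ i : ℕ, i ≤ 0 →
            ((i : ℤ)) ^ 2 ≤ ∑ j ∈ Finset.univ.filter (fun j : Fin 0 => (j : ℕ) < i), x j) ∧
        (∑ j : Fin 0, x j) = ((0 : ℕ) : ℤ) ^ 2} = Set.univ := by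
      ext x
      simp only [Set.mem_setOf_eq, Set.mem_univ, iff_true]
      refine ⟨fun i _ => i.elim0, fun i hi => ?_, by simp⟩
      obtain rfl : i = 0 := Nat.le_zero.mp hi
      simp
    rw [h1, h2, Set.ncard_univ, Set.ncard_univ]
    show Nat.card (Fin 0 → ℕ) ≤ Nat.card (Fin 0 → ℤ)
    rw [Nat.card_unique, Nat.card_unique]
  · -- main case: the map `xmap n` is an injection
    have hfin : {x : Fin n → ℤ |
        (∀ (i : Fin n) (h : (i : ℕ) + 1 < n), x i + 1 ≤ x ⟨(i : ℕ) + 1, h⟩) ∧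
        (∀ i : ℕ, i ≤ n →
            ((i : ℤ)) ^ 2 ≤ ∑ j ∈ Finset.univ.filter (fun j : Fin n => (j : ℕ) < i), x j) ∧
        (∑ j : Fin n, x j) = (n : ℤ) ^ 2}.Finite := by
      apply Set.Finite.subset
        (Set.Finite.pi (fun _ : Fin n => Set.finite_Icc (0 : ℤ) ((n : ℤ) ^ 2)))
      rintro x ⟨h1, h2, h3⟩
      have hlb : ∀ m (hm : m < n), (1 : ℤ) ≤ x ⟨m, hm⟩ := by
        intro m
        induction m with
        | zero =>
          intro hm
          have hfe : Finset.univ.filter (fun j : Fin n => (j : ℕ) < 1) = {⟨0, hm⟩} := by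
            ext j
            simp [Fin.ext_iff]
          have h4 := h2 1 hn
          rw [hfe, Finset.sum_singleton] at h4
          have : ((1 : ℕ) : ℤ) ^ 2 = 1 := by norm_num
          linarith
        | succ p ih =>
          intro hm
          have hstep := h1 ⟨p, by omega⟩ hm
          have hih := ih (by omega)
          linarith
      have hub : ∀ i : Fin n, x i ≤ (n : ℤ) ^ 2 := by
        intro i
        have h4 : ∑ j ∈ Finset.univ.erase i, x j + x i = ∑ j : Fin n, x j :=
          Finset.sum_erase_add _ _ (Finset.mem_univ i)
        have h5 : (0 : ℤ) ≤ ∑ j ∈ Finset.univ.erase i, x j :=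
          Finset.sum_nonneg (fun j _ => by have := hlb j.1 j.2; linarith)
        rw [h3] at h4
        linarith
      intro i _
      simp only [Set.mem_Icc]
      exact ⟨by have := hlb i.1 i.2; linarith, hub i⟩
    refine Set.ncard_le_ncard_of_injOn (xmap n) ?_ ?_ hfin
    · -- maps into the target set
      rintro v ⟨π, hb, hvk⟩
      have hcard := card_ones π hb hvk
      have hSv := ones_eq_image π hb hvk
      have hginj := gm_injective π hb
      have hx : ∀ i, xmap n v i =
          ((((Finset.univ.filter fun k => v k = 1).orderEmbOfFin hcard i :
            Fin (2 * n - 1)) : ℕ) : ℤ) + 1 := by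
        intro i
        simp only [xmap, dif_pos hcard]
      refine ⟨?_, ?_, ?_⟩
      · intro i h
        rw [hx, hx]
        have hmono : ((Finset.univ.filter fun k => v k = 1).orderEmbOfFin hcard i :
              Fin (2 * n - 1)) <
            ((Finset.univ.filter fun k => v k = 1).orderEmbOfFin hcard ⟨(i : ℕ) + 1, h⟩ :
              Fin (2 * n - 1)) :=
          ((Finset.univ.filter fun k => v k = 1).orderEmbOfFin hcard).strictMono
            (by simp [Fin.lt_def])
        have := Fin.lt_def.mp hmono
        omega
      · intro i hi
        have hk := partial_sum_bound π _ hSv hginj hcard i hi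
        calc ((i : ℤ)) ^ 2 = ((i ^ 2 : ℕ) : ℤ) := by push_cast; ring
          _ ≤ ((∑ j ∈ Finset.univ.filter (fun j : Fin n => (j : ℕ) < i),
                ((((Finset.univ.filter fun k => v k = 1).orderEmbOfFin hcard j :
                  Fin (2 * n - 1)) : ℕ) + 1) : ℕ) : ℤ) := by exact_mod_cast hk
          _ = ∑ j ∈ Finset.univ.filter (fun j : Fin n => (j : ℕ) < i), xmap n v j := by
              rw [Nat.cast_sum]
              exact Finset.sum_congr rfl (fun j _ => by rw [hx]; push_cast; ring)
      · have hk := total_sum π _ hSv hginj hcard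
        calc (∑ j : Fin n, xmap n v j)
            = ((∑ j : Fin n, ((((Finset.univ.filter fun k => v k = 1).orderEmbOfFin hcard j :
                Fin (2 * n - 1)) : ℕ) + 1) : ℕ) : ℤ) := by
              rw [Nat.cast_sum]
              exact Finset.sum_congr rfl (fun j _ => by rw [hx]; push_cast; ring)
          _ = ((n ^ 2 : ℕ) : ℤ) := by rw [hk]
          _ = (n : ℤ) ^ 2 := by push_cast; ring
    · -- injectivity
      rintro v ⟨π, hb, hvk⟩ w ⟨ρ, hbw, hwk⟩ heq
      have hcv := card_ones π hb hvk
      have hcw := card_ones ρ hbw hwk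
      have hxv : ∀ i, xmap n v i =
          ((((Finset.univ.filter fun k => v k = 1).orderEmbOfFin hcv i :
            Fin (2 * n - 1)) : ℕ) : ℤ) + 1 := by
        intro i; simp only [xmap, dif_pos hcv]
      have hxw : ∀ i, xmap n w i =
          ((((Finset.univ.filter fun k => w k = 1).orderEmbOfFin hcw i :
            Fin (2 * n - 1)) : ℕ) : ℤ) + 1 := by
        intro i; simp only [xmap, dif_pos hcw]
      have hee : ∀ i, ((Finset.univ.filter fun k => v k = 1).orderEmbOfFin hcv i :
            Fin (2 * n - 1)) = (Finset.univ.filter fun k => w k = 1).orderEmbOfFin hcw i := by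
        intro i
        have h0 := congrFun heq i
        rw [hxv, hxw] at h0
        have h1 : ((((Finset.univ.filter fun k => v k = 1).orderEmbOfFin hcv i :
            Fin (2 * n - 1)) : ℕ) : ℤ)
            = ((((Finset.univ.filter fun k => w k = 1).orderEmbOfFin hcw i :
            Fin (2 * n - 1)) : ℕ) : ℤ) := by linarith
        exact Fin.val_injective (by exact_mod_cast h1)
      have hSS : (Finset.univ.filter fun k => v k = 1)
          = (Finset.univ.filter fun k => w k = 1) := by
        apply Finset.coe_injective
        rw [← Finset.range_orderEmbOfFin _ hcv, ← Finset.range_orderEmbOfFin _ hcw]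
        have : ⇑((Finset.univ.filter fun k => v k = 1).orderEmbOfFin hcv)
            = ⇑((Finset.univ.filter fun k => w k = 1).orderEmbOfFin hcw) := funext hee
        rw [this]
      funext k
      have h1 : v k ≤ 1 := by rw [hvk]; exact hb _
      have h2 : w k ≤ 1 := by rw [hwk]; exact hbw _
      have h3 : v k = 1 ↔ w k = 1 := by
        constructor
        · intro h
          have hmem : k ∈ (Finset.univ.filter fun k => v k = 1) :=
            Finset.mem_filter.mpr ⟨Finset.mem_univ _, h⟩
          rw [hSS] at hmem
          exact (Finset.mem_filter.mp hmem).2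
        · intro h
          have hmem : k ∈ (Finset.univ.filter fun k => w k = 1) :=
            Finset.mem_filter.mpr ⟨Finset.mem_univ _, h⟩
          rw [← hSS] at hmem
          exact (Finset.mem_filter.mp hmem).2
      omega
end

section
/- For every n, the number of permutations of [n] whose antidiagonal X-ray is palindromic is at least the number of involutions of [n]: #{π ∈ S_n : x_k(π) = x_{2n−k}(π) for all k} ≥ #{π ∈ S_n : π = π⁻¹}. -/
lemma key_pal (n : ℕ) (π : Equiv.Perm (Fin n)) (hπ : π = π⁻¹) :
    ∀ k : ℕ, 1 ≤ k → k ≤ 2 * n - 1 →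
      xray n (π * Fin.revPerm) k = xray n (π * Fin.revPerm) (2 * n - k) := by
  intro k hk1 hk2
  set σ : Equiv.Perm (Fin n) := π * Fin.revPerm with hσdef
  have hσ : ∀ a : Fin n, σ (Fin.rev (σ a)) = Fin.rev a := by
    intro a
    simp only [hσdef, Equiv.Perm.mul_apply, Fin.revPerm_apply, Fin.rev_rev]
    nth_rewrite 1 [hπ]
    exact Equiv.symm_apply_apply π _
  have hn : 1 ≤ n := by
    by_contra h
    interval_cases n <;> omega
  unfold xray
  apply Finset.card_bij' (fun a _ => Fin.rev (σ a)) (fun a _ => Fin.rev (σ a))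
  · intro a ha
    simp only [Finset.mem_filter, Finset.mem_univ, true_and] at ha ⊢
    rw [hσ a]
    have h1 : (Fin.rev (σ a) : ℕ) = n - 1 - (σ a : ℕ) := by
      rw [Fin.val_rev]; omega
    have h2 : (Fin.rev a : ℕ) = n - 1 - (a : ℕ) := by
      rw [Fin.val_rev]; omega
    have ha' : (a : ℕ) < n := a.isLt
    have hb' : (σ a : ℕ) < n := (σ a).isLt
    omega
  · intro a ha
    simp only [Finset.mem_filter, Finset.mem_univ, true_and] at ha ⊢
    rw [hσ a]
    have h1 : (Fin.rev (σ a) : ℕ) = n - 1 - (σ a : ℕ) := by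
      rw [Fin.val_rev]; omega
    have h2 : (Fin.rev a : ℕ) = n - 1 - (a : ℕ) := by
      rw [Fin.val_rev]; omega
    have ha' : (a : ℕ) < n := a.isLt
    have hb' : (σ a : ℕ) < n := (σ a).isLt
    omega
  · intro a _
    rw [hσ a, Fin.rev_rev]
  · intro a _
    rw [hσ a, Fin.rev_rev]

/-- The number of permutations of `[n]` with palindromic antidiagonal X-ray is at
least the number of involutions of `[n]`. -/
theorem palindromic_ge_involutions (n : ℕ) :
    {π : Equiv.Perm (Fin n) |
        ∀ k : ℕ, 1 ≤ k → k ≤ 2 * n - 1 → xray n π k = xray n π (2 * n - k)}.ncard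
      ≥
    {π : Equiv.Perm (Fin n) | π = π⁻¹}.ncard := by
  have hinj : Set.InjOn (fun π : Equiv.Perm (Fin n) => π * Fin.revPerm)
      {π : Equiv.Perm (Fin n) | π = π⁻¹} := fun a _ b _ h => by
    simpa using mul_right_cancel h
  have hsub : (fun π : Equiv.Perm (Fin n) => π * Fin.revPerm) ''
      {π : Equiv.Perm (Fin n) | π = π⁻¹} ⊆
      {π : Equiv.Perm (Fin n) |
        ∀ k : ℕ, 1 ≤ k → k ≤ 2 * n - 1 → xray n π k = xray n π (2 * n - k)} := by
    rintro _ ⟨π, hπ, rfl⟩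
    exact key_pal n π hπ
  calc {π : Equiv.Perm (Fin n) | π = π⁻¹}.ncard
      = ((fun π : Equiv.Perm (Fin n) => π * Fin.revPerm) ''
          {π : Equiv.Perm (Fin n) | π = π⁻¹}).ncard :=
        (Set.ncard_image_of_injOn hinj).symm
    _ ≤ _ := Set.ncard_le_ncard hsub (Set.toFinite _)
end

section
/- Let π be a permutation of [n] satisfying π(n + 1 − π(i)) = i for all i ∈ [n] (equivalently, the permutation matrix of π is invariant under rotation by a quarter turn). Then the antidiagonal X-ray of π is palindromic (x_k(π) = x_{2n−k}(π) for all k) and it equals the diagonal X-ray of π (x_k(π) = x^d_k(π) for all k = 1,…,2n−1). -/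
def dxray (n : ℕ) (π : Equiv.Perm (Fin n)) (k : ℕ) : ℕ :=
  (Finset.univ.filter
    (fun i : Fin n => ((π i : ℕ) : ℤ) - ((i : ℕ) : ℤ) = (k : ℤ) - (n : ℤ))).card

/-- If `π` is quarter-turn invariant, i.e. `π(n + 1 - π(i)) = i` for all `i`
(here 0-indexed: `π (rev (π i)) = i`), then its antidiagonal X-ray is
palindromic and equals its diagonal X-ray. -/
theorem quarter_turn_xray (n : ℕ) (π : Equiv.Perm (Fin n))
    (h : ∀ i : Fin n, π ((π i).rev) = i) :
    (∀ k : ℕ, 1 ≤ k → k ≤ 2 * n - 1 → xray n π k = xray n π (2 * n - k)) ∧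
    (∀ k : ℕ, 1 ≤ k → k ≤ 2 * n - 1 → xray n π k = dxray n π k) := by
  have hsymm : ∀ i, π.symm i = (π i).rev := fun i =>
    π.injective (by rw [Equiv.apply_symm_apply, h])
  have hsq : ∀ i, π (π i) = i.rev := fun i => by
    have h1 := hsymm (π i)
    rw [Equiv.symm_apply_apply] at h1
    have := congrArg Fin.rev h1
    rw [Fin.rev_rev] at this; exact this.symm
  have hrev : ∀ i, π i.rev = (π i).rev := fun i => by
    rw [← hsq i, hsq (π i)]
  constructor
  · intro k hk1 hk2
    unfold xray
    refine Finset.card_bij' (fun i _ => i.rev) (fun i _ => i.rev) ?_ ?_ ?_ ?_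
    · intro a ha
      simp only [Finset.mem_filter, Finset.mem_univ, true_and] at ha ⊢
      rw [hrev, Fin.val_rev, Fin.val_rev]
      have := a.isLt; have := (π a).isLt
      omega
    · intro a ha
      simp only [Finset.mem_filter, Finset.mem_univ, true_and] at ha ⊢
      rw [hrev, Fin.val_rev, Fin.val_rev]
      have := a.isLt; have := (π a).isLt
      omega
    · intro a _; exact Fin.rev_rev a
    · intro a _; exact Fin.rev_rev a
  · intro k hk1 hk2
    unfold xray dxray
    refine Finset.card_bij' (fun i _ => π.symm i) (fun i _ => π i) ?_ ?_ ?_ ?_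
    · intro a ha
      simp only [Finset.mem_filter, Finset.mem_univ, true_and] at ha ⊢
      rw [Equiv.apply_symm_apply, hsymm, Fin.val_rev]
      have := a.isLt; have := (π a).isLt
      omega
    · intro a ha
      simp only [Finset.mem_filter, Finset.mem_univ, true_and] at ha ⊢
      rw [hsq, Fin.val_rev]
      have := a.isLt; have := (π a).isLt
      omega
    · intro a _; exact π.apply_symm_apply a
    · intro a _; exact π.symm_apply_apply a
end

section
/- If there exists a permutation π of [n] satisfying π(n + 1 − π(i)) = i for all i ∈ [n] (a quarter-turn invariant permutation), then n ≡ 0 (mod 4) or n ≡ 1 (mod 4). -/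
/-- If there exists a quarter-turn invariant permutation of `[n]`
(`π(n + 1 - π(i)) = i` for all `i`; 0-indexed: `π (rev (π i)) = i`),
then `n ≡ 0` or `1 (mod 4)`. -/
theorem quarter_turn_exists_mod_four (n : ℕ)
    (h : ∃ π : Equiv.Perm (Fin n), ∀ i : Fin n, π ((π i).rev) = i) :
    n % 4 = 0 ∨ n % 4 = 1 := by
  obtain ⟨π, hπ⟩ := h
  -- π ∘ π = rev
  have hrev : ∀ j : Fin n, π j.rev = π.symm j := by
    intro j
    have := hπ (π.symm j)
    rwa [Equiv.apply_symm_apply] at this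
  have hsq : ∀ i : Fin n, π (π i) = i.rev := by
    intro i
    have := hrev i.rev
    rw [Fin.rev_rev] at this
    rw [this, Equiv.apply_symm_apply]
  -- rev has at most one fixed point
  have hrevfix : ∀ i j : Fin n, i.rev = i → j.rev = j → i = j := by
    intro i j hi hj
    have hi' := congrArg Fin.val hi
    have hj' := congrArg Fin.val hj
    rw [Fin.val_rev] at hi' hj'
    have := i.isLt; have := j.isLt
    exact Fin.ext (by omega)
  -- fixed points of π² are fixed points of π
  have claimA : ∀ i : Fin n, π (π i) = i → π i = i := by
    intro i hi
    have h1 : i.rev = i := by rw [← hsq i, hi]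
    have h2 : (π i).rev = π i := by
      rw [← hsq (π i), hi]
    exact hrevfix _ _ h2 h1
  -- π ^ 4 = 1
  have hord : π ^ 4 = 1 := by
    apply Equiv.ext
    intro i
    have h4 : (π ^ 4) i = π (π (π (π i))) := by
      rw [show (4 : ℕ) = 2 + 2 from rfl, pow_add, pow_two]
      rfl
    simp only [Equiv.Perm.coe_one, id_eq]
    rw [h4, hsq i, hsq i.rev, Fin.rev_rev]
  -- every cycle length is 4
  have hcyc4 : ∀ a ∈ π.cycleType, a = 4 := by
    intro a ha
    have h2 : 2 ≤ a := Equiv.Perm.two_le_of_mem_cycleType ha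
    have hdvd : a ∣ 4 := by
      have := Multiset.dvd_lcm ha
      rw [Equiv.Perm.lcm_cycleType] at this
      exact this.trans (orderOf_dvd_of_pow_eq_one hord)
    have hle : a ≤ 4 := Nat.le_of_dvd (by norm_num) hdvd
    -- a ∈ {2, 4}; rule out 2
    interval_cases a
    · -- a = 2: get a transposition inside π
      exfalso
      rw [Equiv.Perm.mem_cycleType_iff] at ha
      obtain ⟨c, τ, hστ, hdisj, hc, hcard⟩ := ha
      obtain ⟨x, hx⟩ := Finset.card_pos.mp (by rw [hcard]; norm_num : 0 < c.support.card)
      have hd := Equiv.Perm.disjoint_iff_disjoint_support.mp hdisj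
      have hτx : τ x = x := by
        by_contra hτx
        exact Finset.disjoint_left.mp hd hx (Equiv.Perm.mem_support.mpr hτx)
      have hcx : c x ∈ c.support := Equiv.Perm.apply_mem_support.mpr hx
      have hτcx : τ (c x) = (c x) := by
        by_contra hτcx
        exact Finset.disjoint_left.mp hd hcx (Equiv.Perm.mem_support.mpr hτcx)
      have hcomm : c * τ = τ * c := (Equiv.Perm.Disjoint.commute hdisj)
      have hπx : π x = c x := by
        rw [hστ]; simp [Equiv.Perm.mul_apply, hτx]
      have hπcx : π (c x) = c (c x) := by
        rw [hστ]; simp [Equiv.Perm.mul_apply, hτcx]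
      -- c is a swap, so c (c x) = x
      have hswap : c.IsSwap := Equiv.Perm.card_support_eq_two.mp hcard
      obtain ⟨u, v, huv, rfl⟩ := hswap
      have hcc : ∀ y, Equiv.swap u v (Equiv.swap u v y) = y := fun y =>
        Equiv.swap_apply_self u v y
      have hπ2 : π (π x) = x := by rw [hπx, hπcx, hcc]
      have hfix := claimA x hπ2
      rw [hπx] at hfix
      exact (Equiv.Perm.mem_support.mp hx) hfix
    · norm_num at hdvd
    · rfl
  -- support card is divisible by 4
  have hsupp : π.support.card = 4 * Multiset.card π.cycleType := by
    rw [← Equiv.Perm.sum_cycleType]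
    rw [Multiset.eq_replicate_card.mpr hcyc4, Multiset.sum_replicate,
        Multiset.card_replicate, smul_eq_mul, mul_comm]
  -- fixed points: at most one
  have hfixcard : (Finset.univ.filter fun i : Fin n => π i = i).card ≤ 1 := by
    apply Finset.card_le_one.mpr
    intro i hi j hj
    simp only [Finset.mem_filter] at hi hj
    have hi' : i.rev = i := by rw [← hsq i, hi.2, hi.2]
    have hj' : j.rev = j := by rw [← hsq j, hj.2, hj.2]
    exact hrevfix i j hi' hj'
  have hn : π.support.card + (Finset.univ.filter fun i : Fin n => π i = i).card = n := by
    have hs : π.support = Finset.univ.filter fun i : Fin n => ¬ π i = i := by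
      ext i; simp [Equiv.Perm.mem_support]
    rw [hs, add_comm,
      Finset.card_filter_add_card_filter_not (p := fun i : Fin n => π i = i),
      Finset.card_univ, Fintype.card_fin]
  omega
end

section
/- For every n with n ≡ 0 (mod 4), the number of permutations π of [n] satisfying π(n + 1 − π(i)) = i for all i equals the number of permutations σ of [n+1] satisfying σ(n + 2 − σ(i)) = i for all i. -/
section Aux

variable {n : ℕ}

private lemma optionCongr_of_fix_none {α : Type*} (τ : Equiv.Perm (Option α))
    (h : τ none = none) : Equiv.optionCongr (Equiv.removeNone τ) = τ := by
  ext x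
  cases x with
  | none => simp [h]
  | some i =>
    have hne : τ (some i) ≠ none := by
      intro hc
      exact (Option.some_ne_none i) (τ.injective (hc.trans h.symm))
    obtain ⟨y, hy⟩ := Option.ne_none_iff_exists'.mp hne
    have h2 := Equiv.removeNone_some τ ⟨y, hy⟩
    rw [← h2]
    rfl

private lemma rev_succAbove (hn2 : n % 2 = 0) (c : Fin (n + 1)) (hc : (c : ℕ) = n / 2)
    (i : Fin n) : (c.succAbove i).rev = c.succAbove i.rev := by
  have hi := i.isLt
  have hrv : (i.rev : ℕ) = n - (i + 1) := Fin.val_rev i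
  by_cases h : (i : ℕ) < n / 2
  · rw [Fin.succAbove_of_castSucc_lt c i (by rw [Fin.lt_def]; simpa [hc] using h),
      Fin.succAbove_of_le_castSucc c i.rev
        (by rw [Fin.le_def]; simp only [Fin.coe_castSucc, hrv, hc]; omega)]
    apply Fin.ext
    simp only [Fin.val_rev, Fin.coe_castSucc, Fin.val_succ, hrv]; omega
  · rw [Fin.succAbove_of_le_castSucc c i (by rw [Fin.le_def]; simpa [hc] using h),
      Fin.succAbove_of_castSucc_lt c i.rev
        (by rw [Fin.lt_def]; simp only [Fin.coe_castSucc, hrv, hc]; omega)]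
    apply Fin.ext
    simp only [Fin.val_rev, Fin.coe_castSucc, Fin.val_succ, hrv]; omega

private lemma rev_center (hn2 : n % 2 = 0) (c : Fin (n + 1)) (hc : (c : ℕ) = n / 2) :
    c.rev = c := by
  apply Fin.ext
  simp only [Fin.val_rev]; omega

end Aux

/-- For `n ≡ 0 (mod 4)`, the number of quarter-turn invariant permutations of `[n]`
equals the number of quarter-turn invariant permutations of `[n+1]`. -/
theorem quarter_turn_count_succ (n : ℕ) (hn : n % 4 = 0) :
    {π : Equiv.Perm (Fin n) | ∀ i : Fin n, π ((π i).rev) = i}.ncard =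
    {σ : Equiv.Perm (Fin (n + 1)) | ∀ i : Fin (n + 1), σ ((σ i).rev) = i}.ncard := by
  have hn2 : n % 2 = 0 := by omega
  set c : Fin (n + 1) := ⟨n / 2, by omega⟩ with hc
  have hcval : (c : ℕ) = n / 2 := rfl
  have hrevc : c.rev = c := rev_center hn2 c hcval
  -- the embedding map
  set F : Equiv.Perm (Fin n) → Equiv.Perm (Fin (n + 1)) :=
    fun π => ((finSuccEquiv' c).trans (Equiv.optionCongr π)).trans (finSuccEquiv' c).symm
    with hF
  have hFc : ∀ π, F π c = c := by
    intro π
    simp [hF, finSuccEquiv'_at, finSuccEquiv'_symm_none]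
  have hFe : ∀ π (i : Fin n), F π (c.succAbove i) = c.succAbove (π i) := by
    intro π i
    simp [hF, finSuccEquiv'_succAbove, finSuccEquiv'_symm_some]
  have hFinj : Function.Injective F := by
    intro a b hab
    have : Equiv.optionCongr a = Equiv.optionCongr b := by
      have := congrArg (fun σ : Equiv.Perm (Fin (n+1)) =>
        ((finSuccEquiv' c).symm.trans σ).trans (finSuccEquiv' c)) hab
      simpa [hF, Equiv.trans_assoc, ← Equiv.trans_assoc (finSuccEquiv' c).symm,
        Equiv.symm_trans_self, Equiv.refl_trans] using this
    exact Equiv.optionCongr_injective this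
  have himg : {σ : Equiv.Perm (Fin (n + 1)) | ∀ i : Fin (n + 1), σ ((σ i).rev) = i} =
      F '' {π : Equiv.Perm (Fin n) | ∀ i : Fin n, π ((π i).rev) = i} := by
    ext σ
    constructor
    · intro hσ
      -- σ fixes c
      have hσc : σ c = c := by
        have h1 : σ ((σ c).rev) = c := hσ c
        have h2 : σ (((σ ((σ c).rev)).rev)) = (σ c).rev := hσ ((σ c).rev)
        rw [h1, hrevc] at h2
        have hval := congrArg Fin.val h2
        rw [Fin.val_rev] at hval
        apply Fin.ext
        have := (σ c).isLt
        rw [hcval]; omega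
      -- extract π
      set τ : Equiv.Perm (Option (Fin n)) :=
        ((finSuccEquiv' c).symm.trans σ).trans (finSuccEquiv' c) with hτ
      have hτn : τ none = none := by
        simp [hτ, finSuccEquiv'_symm_none, hσc, finSuccEquiv'_at]
      set π := Equiv.removeNone τ with hπ
      have hoc : Equiv.optionCongr π = τ := optionCongr_of_fix_none τ hτn
      have hFπ : F π = σ := by
        rw [hF]
        simp only [hoc, hτ]
        ext x
        simp
      refine ⟨π, ?_, hFπ⟩
      intro i
      apply Fin.succAbove_right_injective (p := c)
      have key : σ (c.succAbove i) = c.succAbove (π i) := by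
        rw [← hFπ, hFe]
      have key2 : σ (c.succAbove (π i).rev) = c.succAbove (π ((π i).rev)) := by
        rw [← hFπ, hFe]
      have := hσ (c.succAbove i)
      rw [key, rev_succAbove hn2 c hcval, key2] at this
      exact this
    · rintro ⟨π, hπ, rfl⟩
      intro x
      rcases eq_or_ne x c with rfl | hx
      · rw [hFc, hrevc, hFc]
      · obtain ⟨i, rfl⟩ := Fin.exists_succAbove_eq hx
        rw [hFe, rev_succAbove hn2 c hcval, hFe, hπ]
  rw [himg, Set.ncard_image_of_injective _ hFinj]
end

section
/- The permutation ρ = 369274185 of [9] (in one-line notation: ρ(1)=3, ρ(2)=6, ρ(3)=9, ρ(4)=2, ρ(5)=7, ρ(6)=4, ρ(7)=1, ρ(8)=8, ρ(9)=5) has palindromic antidiagonal X-ray equal to its diagonal X-ray (x_k(ρ) = x_{18−k}(ρ) and x_k(ρ) = x^d_k(ρ) for all k = 1,…,17), yet ρ is not quarter-turn invariant: there exists i ∈ [9] with ρ(10 − ρ(i)) ≠ i. Consequently, the number of permutations of [9] whose antidiagonal X-ray is palindromic and equal to their diagonal X-ray strictly exceeds the number of quarter-turn invariant permutations of [9]. 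-/
section aux

variable (π : Equiv.Perm (Fin 9))

/-- For QTI permutations, the inverse is rev ∘ π. -/
lemma qti_symm (h : ∀ i : Fin 9, π ((π i).rev) = i) (i : Fin 9) :
    ((π.symm i : ℕ) : ℤ) = 8 - ((π i : ℕ) : ℤ) := by
  have h2 : (π i).rev = π.symm i := π.injective (by rw [Equiv.apply_symm_apply]; exact h i)
  rw [← h2, Fin.val_rev]
  have := (π i).is_lt
  push_cast
  omega

lemma qti_sq (h : ∀ i : Fin 9, π ((π i).rev) = i) (j : Fin 9) :
    ((π (π j) : ℕ) : ℤ) = 8 - ((j : ℕ) : ℤ) := by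
  have h1 := qti_symm π h (π j)
  rw [Equiv.symm_apply_apply] at h1
  omega

lemma qti_xray_eq_dxray (h : ∀ i : Fin 9, π ((π i).rev) = i) (k : ℕ) :
    xray 9 π k = dxray 9 π k := by
  unfold xray dxray
  refine Finset.card_bij' (fun a _ => (π a).rev) (fun b _ => π b) ?_ ?_ ?_ ?_
  · intro a ha
    simp only [Finset.mem_filter, Finset.mem_univ, true_and] at ha ⊢
    rw [h a, Fin.val_rev]
    have h1 := (π a).is_lt
    have h2 := a.is_lt
    push_cast
    omega
  · intro b hb
    simp only [Finset.mem_filter, Finset.mem_univ, true_and] at hb ⊢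
    have h1 := qti_sq π h b
    have h2 := (π b).is_lt
    have h3 := b.is_lt
    omega
  · intro a _; exact h a
  · intro b _
    apply π.injective
    exact h (π b)

lemma qti_xray_palin (h : ∀ i : Fin 9, π ((π i).rev) = i) (k : ℕ) (hk1 : 1 ≤ k)
    (hk2 : k ≤ 17) : xray 9 π k = xray 9 π (18 - k) := by
  rw [qti_xray_eq_dxray π h k]
  unfold xray dxray
  symm
  refine Finset.card_bij' (fun a _ => π a) (fun b _ => π.symm b) ?_ ?_ ?_ ?_
  · intro a ha
    simp only [Finset.mem_filter, Finset.mem_univ, true_and] at ha ⊢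
    have h1 := qti_sq π h a
    have h2 := (π a).is_lt
    have h3 := a.is_lt
    have h4 : ((18 - k : ℕ) : ℤ) = 18 - (k : ℤ) := by omega
    omega
  · intro b hb
    simp only [Finset.mem_filter, Finset.mem_univ, true_and] at hb ⊢
    have h1 := qti_symm π h b
    have h2 := (π b).is_lt
    have h3 := b.is_lt
    have h4 := (π.symm b).is_lt
    have h5 : ((π (π.symm b) : ℕ) : ℤ) = (b : ℕ) := by rw [Equiv.apply_symm_apply]
    have h6 : ((18 - k : ℕ) : ℤ) = 18 - (k : ℤ) := by omega
    omega
  · intro a _; exact π.symm_apply_apply a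
  · intro b _; exact π.apply_symm_apply b

def rhoFun : Fin 9 → Fin 9 := ![2, 5, 8, 1, 6, 3, 0, 7, 4]
def rhoInv : Fin 9 → Fin 9 := ![6, 3, 0, 5, 8, 1, 4, 7, 2]

def rho : Equiv.Perm (Fin 9) :=
  ⟨rhoFun, rhoInv, by decide, by decide⟩

lemma rho_xray : ∀ k : ℕ, 1 ≤ k → k ≤ 17 →
    xray 9 rho k = xray 9 rho (18 - k) ∧ xray 9 rho k = dxray 9 rho k := by
  intro k hk1 hk2
  interval_cases k <;> exact ⟨by decide, by decide⟩

lemma rho_not_qti : ∃ i : Fin 9, rho ((rho i).rev) ≠ i := by decide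

end aux

/-- The permutation `ρ = 369274185` of `[9]` (0-indexed below) has palindromic
antidiagonal X-ray equal to its diagonal X-ray, yet is not quarter-turn invariant;
consequently the permutations of `[9]` with palindromic antidiagonal X-ray equal to
their diagonal X-ray strictly outnumber the quarter-turn invariant ones. -/
theorem rho_witness_and_count :
    (∃ ρ : Equiv.Perm (Fin 9),
      (ρ 0 = 2 ∧ ρ 1 = 5 ∧ ρ 2 = 8 ∧ ρ 3 = 1 ∧ ρ 4 = 6 ∧
       ρ 5 = 3 ∧ ρ 6 = 0 ∧ ρ 7 = 7 ∧ ρ 8 = 4) ∧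
      (∀ k : ℕ, 1 ≤ k → k ≤ 17 → xray 9 ρ k = xray 9 ρ (18 - k)) ∧
      (∀ k : ℕ, 1 ≤ k → k ≤ 17 → xray 9 ρ k = dxray 9 ρ k) ∧
      (∃ i : Fin 9, ρ ((ρ i).rev) ≠ i)) ∧
    {π : Equiv.Perm (Fin 9) |
        (∀ k : ℕ, 1 ≤ k → k ≤ 17 → xray 9 π k = xray 9 π (18 - k)) ∧
        (∀ k : ℕ, 1 ≤ k → k ≤ 17 → xray 9 π k = dxray 9 π k)}.ncard
      >
    {π : Equiv.Perm (Fin 9) | ∀ i : Fin 9, π ((π i).rev) = i}.ncard := by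
  constructor
  · exact ⟨rho, ⟨by decide, by decide, by decide, by decide, by decide, by decide,
      by decide, by decide, by decide⟩,
      fun k h1 h2 => (rho_xray k h1 h2).1, fun k h1 h2 => (rho_xray k h1 h2).2,
      rho_not_qti⟩
  · apply Set.ncard_lt_ncard
    · constructor
      · intro π hπ
        exact ⟨fun k h1 h2 => qti_xray_palin π hπ k h1 h2,
          fun k _ _ => qti_xray_eq_dxray π hπ k⟩
      · intro hsub
        obtain ⟨i, hi⟩ := rho_not_qti
        exact hi ((hsub ⟨fun k h1 h2 => (rho_xray k h1 h2).1,
          fun k h1 h2 => (rho_xray k h1 h2).2⟩) i)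
    · exact Set.toFinite _
end
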